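/- arXiv:1405.6555 — 6 statements merged into one kernel-verified Lean document; each statement's English description precedes it below -/
import Mathlib

section
/- Under complete randomization, the variance of the difference-in-means estimator equals V_N = (1/(N−1))·{ ((N−m)/m)·S_N²(y₁) + ((N−(n−m))/(n−m))·S_N²(y₀) + 2·S_N(y₁,y₀) }, where S_N²(v) = (1/N)Σᵢ(vᵢ−μ_N(v))² and S_N(v,w) = (1/N)Σᵢ(vᵢ−μ_N(v))(wᵢ−μ_N(w)). -/
/-!
Write `a = y₁ - μ₁` and `b = y₀ - μ₀`. On a design with treated set `T` and control set `C` the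
error of the estimator is `(∑_T a) / m - (∑_C b) / k`, so its mean square is a combination of sums
`∑_p (∑_{i ∈ s p} f i) (∑_{j ∈ t p} g j)` with `s, t ∈ {T, C}`. Such a sum equals
`∑_{i,j} f i g j c(i, j)`, where `c(i, j)` counts the designs with `i ∈ s p` and `j ∈ t p`. The set
of designs is invariant under permutations of the units, which act 2-transitively, so `c` takes one
value `c₀` on the diagonal and one value `c₁` off it, and as `∑ f = 0` the sum is
`(c₀ - c₁) ∑ f g`. Double counting, `∑_i c(i, i) = ∑_p #(s p ∩ t p)` and
`∑_{i,j} c(i, j) = ∑_p #(s p) #(t p)`, determines `c₀ - c₁` without any binomial coefficients.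
-/

open Finset Equiv
open scoped Pointwise

theorem sum_sum_mul_ite_eq {ι : Type*} [Fintype ι] [DecidableEq ι] (f g : ι → ℝ) (c d : ℝ) :
    ∑ i, ∑ j, f i * g j * (if i = j then c else d) =
      (c - d) * ∑ i, f i * g i + d * ((∑ i, f i) * ∑ j, g j) := by
  have hsplit : ∀ i j, f i * g j * (if i = j then c else d) =
      d * (f i * g j) + if i = j then (c - d) * (f i * g j) else 0 := by
    intro i j
    split_ifs with hij
    · subst hij; ring
    · ring
  simp_rw [hsplit, sum_add_distrib, sum_ite_eq, mem_univ, if_true, ← mul_sum, ← sum_mul]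
  ring

section PairCount

variable {α D : Type*} [DecidableEq α]

def pairCount (A : Finset D) (s t : D → Finset α) (i j : α) : ℕ :=
  #{p ∈ A | i ∈ s p ∧ j ∈ t p}

variable (A : Finset D) (s t : D → Finset α)

theorem sum_mul_sum_eq_sum_pairCount [Fintype α] (f g : α → ℝ) :
    ∑ p ∈ A, (∑ i ∈ s p, f i) * (∑ j ∈ t p, g j) =
      ∑ i, ∑ j, f i * g j * pairCount A s t i j := by
  calc ∑ p ∈ A, (∑ i ∈ s p, f i) * (∑ j ∈ t p, g j)
      = ∑ p ∈ A, ∑ i, ∑ j, if i ∈ s p ∧ j ∈ t p then f i * g j else 0 := by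
        simp_rw [← ite_zero_mul_ite_zero, ← sum_mul_sum, Fintype.sum_ite_mem]
    _ = ∑ i, ∑ j, f i * g j * pairCount A s t i j := by
        rw [sum_comm]
        refine sum_congr rfl fun i _ => ?_
        rw [sum_comm]
        refine sum_congr rfl fun j _ => ?_
        rw [← sum_filter, sum_const, nsmul_eq_mul, mul_comm, pairCount]

theorem sum_pairCount_self [Fintype α] :
    ∑ i, pairCount A s t i i = ∑ p ∈ A, #(s p ∩ t p) := by
  simp_rw [pairCount, card_filter, ← mem_inter]
  rw [sum_comm]
  simp only [sum_boole, Nat.cast_id, filter_univ_mem]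

variable {A s t}

theorem sum_mul_sum_of_pairCount_eq_ite [Fintype α] {c d : ℕ}
    (hcd : ∀ i j, pairCount A s t i j = if i = j then c else d) (f g : α → ℝ) :
    ∑ p ∈ A, (∑ i ∈ s p, f i) * (∑ j ∈ t p, g j) =
      (c - d) * ∑ i, f i * g i + d * ((∑ i, f i) * ∑ j, g j) := by
  rw [sum_mul_sum_eq_sum_pairCount, ← sum_sum_mul_ite_eq]
  refine sum_congr rfl fun i _ => sum_congr rfl fun j _ => ?_
  rw [hcd]
  split_ifs <;> rfl

variable [MulAction (Perm α) D]

theorem pairCount_smul (hA : ∀ (σ : Perm α) p, σ • p ∈ A ↔ p ∈ A)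
    (hs : ∀ (σ : Perm α) p, s (σ • p) = σ • s p) (ht : ∀ (σ : Perm α) p, t (σ • p) = σ • t p)
    (σ : Perm α) (i j : α) : pairCount A s t (σ • i) (σ • j) = pairCount A s t i j := by
  refine card_nbij' (σ⁻¹ • ·) (σ • ·) ?_ ?_ ?_ ?_ <;> intro p hp <;>
    simp only [coe_filter, Set.mem_ofPred_eq, hA, hs, ht, mem_inv_smul_finset_iff,
      smul_mem_smul_finset_iff, inv_smul_smul, smul_inv_smul] at hp ⊢ <;> exact hp

theorem exists_pairCount_eq_ite [Nontrivial α] (hA : ∀ (σ : Perm α) p, σ • p ∈ A ↔ p ∈ A)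
    (hs : ∀ (σ : Perm α) p, s (σ • p) = σ • s p) (ht : ∀ (σ : Perm α) p, t (σ • p) = σ • t p) :
    ∃ c d : ℕ, ∀ i j, pairCount A s t i j = if i = j then c else d := by
  obtain ⟨a, b, hab⟩ := exists_pair_ne α
  refine ⟨pairCount A s t a a, pairCount A s t a b, fun i j => ?_⟩
  split_ifs with hij
  · obtain ⟨σ, rfl⟩ := MulAction.exists_smul_eq (Perm α) a i
    rw [← hij, pairCount_smul hA hs ht]
  · obtain ⟨σ, rfl, rfl⟩ := MulAction.is_two_pretransitive_iff.mp
      (Perm.isMultiplyPretransitive α 2) hab hij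
    exact pairCount_smul hA hs ht σ a b

theorem sum_mul_sum_of_perm_invariant [Fintype α] [Nontrivial α]
    (hA : ∀ (σ : Perm α) p, σ • p ∈ A ↔ p ∈ A)
    (hs : ∀ (σ : Perm α) p, s (σ • p) = σ • s p) (ht : ∀ (σ : Perm α) p, t (σ • p) = σ • t p)
    (f g : α → ℝ) (hf : ∑ i, f i = 0) :
    (Fintype.card α : ℝ) * (Fintype.card α - 1) * ∑ p ∈ A, (∑ i ∈ s p, f i) * (∑ j ∈ t p, g j) =
      (Fintype.card α * ∑ p ∈ A, (#(s p ∩ t p) : ℝ) - ∑ p ∈ A, (#(s p) * #(t p) : ℝ)) *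
        ∑ i, f i * g i := by
  obtain ⟨c, d, hcd⟩ := exists_pairCount_eq_ite hA hs ht
  have hsum := sum_mul_sum_of_pairCount_eq_ite hcd f g
  have htotal := sum_mul_sum_of_pairCount_eq_ite hcd 1 1
  rw [hf, zero_mul, mul_zero, add_zero] at hsum
  simp only [Pi.one_apply, sum_const, card_univ, nsmul_eq_mul, mul_one] at htotal
  have hdiag : (Fintype.card α : ℝ) * c = ∑ p ∈ A, (#(s p ∩ t p) : ℝ) := by
    have := sum_pairCount_self A s t
    simp only [hcd, if_true, sum_const, card_univ, smul_eq_mul] at this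
    exact_mod_cast this
  rw [hsum, ← hdiag, htotal]
  ring

end PairCount

theorem sum_sub_sum_div_card_eq_zero {ι : Type*} [Fintype ι] [Nonempty ι] (y : ι → ℝ) :
    ∑ i, (y i - (∑ j, y j) / Fintype.card ι) = 0 := by
  rw [sum_sub_distrib, sum_const, card_univ, nsmul_eq_mul, mul_div_cancel₀]
  · ring
  · exact_mod_cast Fintype.card_ne_zero

theorem sum_sub_const_div_eq {ι : Type*} {s : Finset ι} {k : ℕ} (hs : #s = k) (hk : k ≠ 0)
    (y : ι → ℝ) (c : ℝ) : (∑ i ∈ s, (y i - c)) / k = (∑ i ∈ s, y i) / k - c := by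
  rw [sum_sub_distrib, sum_const, hs, nsmul_eq_mul, sub_div, mul_div_cancel_left₀]
  exact_mod_cast hk

section Designs

variable {α : Type*} [Fintype α] [DecidableEq α] {n m : ℕ}

/-- A completely randomized design: a sample `p.1` of `n` units, of which the `m` units of `p.2`
are treated and those of `p.1 \ p.2` are controls. -/
def designs (α : Type*) [Fintype α] [DecidableEq α] (n m : ℕ) : Finset (Finset α × Finset α) :=
  {p | p.2 ⊆ p.1 ∧ #p.1 = n ∧ #p.2 = m}

theorem smul_mem_designs (σ : Perm α) (p : Finset α × Finset α) :
    σ • p ∈ designs α n m ↔ p ∈ designs α n m := by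
  simp [designs, smul_finset_subset_smul_finset_iff, card_smul_finset]

theorem designs_nonempty (hmn : m ≤ n) (hn : n ≤ Fintype.card α) : (designs α n m).Nonempty := by
  obtain ⟨S, -, hS⟩ := exists_subset_card_eq (s := univ) (by simpa using hn)
  obtain ⟨T, hTS, hT⟩ := exists_subset_card_eq (s := S) (hS ▸ hmn)
  exact ⟨(S, T), by simp [designs, hTS, hS, hT]⟩

theorem card_treated_of_mem_designs {p : Finset α × Finset α} (hp : p ∈ designs α n m) :
    #p.2 = m := by
  simp only [designs, mem_filter, mem_univ, true_and] at hp
  exact hp.2.2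

theorem card_control_of_mem_designs {k : ℕ} (hk : m + k = n) {p : Finset α × Finset α}
    (hp : p ∈ designs α n m) : #(p.1 \ p.2) = k := by
  simp only [designs, mem_filter, mem_univ, true_and] at hp
  rw [card_sdiff_of_subset hp.1, hp.2.1, hp.2.2]
  omega

theorem sum_mul_sum_designs [Nontrivial α] (s t : Finset α × Finset α → Finset α)
    (hs : ∀ (σ : Perm α) p, s (σ • p) = σ • s p) (ht : ∀ (σ : Perm α) p, t (σ • p) = σ • t p)
    {a b e : ℕ} (hcard : ∀ p ∈ designs α n m, #(s p) = a ∧ #(t p) = b ∧ #(s p ∩ t p) = e)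
    (f g : α → ℝ) (hf : ∑ i, f i = 0) :
    (Fintype.card α : ℝ) * (Fintype.card α - 1) *
        ∑ p ∈ designs α n m, (∑ i ∈ s p, f i) * (∑ j ∈ t p, g j) =
      #(designs α n m) * (Fintype.card α * e - a * b) * ∑ i, f i * g i := by
  have hinter : ∑ p ∈ designs α n m, (#(s p ∩ t p) : ℝ) = ∑ p ∈ designs α n m, (e : ℝ) :=
    sum_congr rfl fun p hp => by rw [(hcard p hp).2.2]
  have hprod : ∑ p ∈ designs α n m, (#(s p) * #(t p) : ℝ) = ∑ p ∈ designs α n m, (a * b : ℝ) :=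
    sum_congr rfl fun p hp => by rw [(hcard p hp).1, (hcard p hp).2.1]
  rw [sum_mul_sum_of_perm_invariant smul_mem_designs hs ht f g hf, hinter, hprod]
  simp only [sum_const, nsmul_eq_mul]
  ring

theorem sum_sq_diffMeans_designs [Nontrivial α] {k : ℕ} (hk : m + k = n) (hm0 : m ≠ 0)
    (hk0 : k ≠ 0) (a b : α → ℝ) (ha : ∑ i, a i = 0) (hb : ∑ i, b i = 0) :
    (Fintype.card α : ℝ) * (Fintype.card α - 1) *
        ∑ p ∈ designs α n m, ((∑ i ∈ p.2, a i) / m - (∑ i ∈ p.1 \ p.2, b i) / k) ^ 2 =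
      #(designs α n m) * ((Fintype.card α - m) / m * ∑ i, a i ^ 2
        + (Fintype.card α - k) / k * ∑ i, b i ^ 2 + 2 * ∑ i, a i * b i) := by
  have hsdiff (σ : Perm α) (p : Finset α × Finset α) :
      (σ • p).1 \ (σ • p).2 = σ • (p.1 \ p.2) :=
    (smul_finset_sdiff ..).symm
  have hTT := sum_mul_sum_designs (n := n) (m := m) Prod.snd Prod.snd (fun _ _ => rfl)
    (fun _ _ => rfl) (a := m) (b := m) (e := m)
    (fun p hp => by simp [card_treated_of_mem_designs hp]) a a ha
  have hTC := sum_mul_sum_designs (n := n) (m := m) Prod.snd (fun p => p.1 \ p.2)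
    (fun _ _ => rfl) hsdiff (a := m) (b := k) (e := 0)
    (fun p hp => by simp [card_treated_of_mem_designs hp, card_control_of_mem_designs hk hp])
    a b ha
  have hCC := sum_mul_sum_designs (n := n) (m := m) (fun p => p.1 \ p.2) (fun p => p.1 \ p.2)
    hsdiff hsdiff (a := k) (b := k) (e := k)
    (fun p hp => by simp [card_control_of_mem_designs hk hp]) b b hb
  have hm' : (m : ℝ) ≠ 0 := by exact_mod_cast hm0
  have hk' : (k : ℝ) ≠ 0 := by exact_mod_cast hk0
  have hsq (p : Finset α × Finset α) :
      ((∑ i ∈ p.2, a i) / m - (∑ i ∈ p.1 \ p.2, b i) / k) ^ 2 =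
        (∑ i ∈ p.2, a i) * (∑ i ∈ p.2, a i) / m ^ 2
          - 2 * ((∑ i ∈ p.2, a i) * (∑ i ∈ p.1 \ p.2, b i)) / (m * k)
          + (∑ i ∈ p.1 \ p.2, b i) * (∑ i ∈ p.1 \ p.2, b i) / k ^ 2 := by
    field_simp
    ring
  simp_rw [hsq, sum_add_distrib, sum_sub_distrib, ← sum_div, ← mul_sum]
  linear_combination (norm := skip) hTT / (m : ℝ) ^ 2 - 2 * hTC / (m * k) + hCC / (k : ℝ) ^ 2
  field_simp
  ring

end Designs

theorem stmt1_general (N n m : ℕ) (hnN : n ≤ N) (hm : 2 ≤ m)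
    (hmn : m + 2 ≤ n) (y1 y0 : Fin N → ℝ) :
    let μ1 := (∑ i, y1 i) / (N : ℝ)
    let μ0 := (∑ i, y0 i) / (N : ℝ)
    let S1 := (∑ i, (y1 i - μ1) ^ 2) / (N : ℝ)
    let S0 := (∑ i, (y0 i - μ0) ^ 2) / (N : ℝ)
    let S10 := (∑ i, (y1 i - μ1) * (y0 i - μ0)) / (N : ℝ)
    let A : Finset (Finset (Fin N) × Finset (Fin N)) :=
      Finset.univ.filter (fun p => p.2 ⊆ p.1 ∧ p.1.card = n ∧ p.2.card = m)
    (∑ p ∈ A, (((∑ i ∈ p.2, y1 i) / (m : ℝ)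
          - (∑ i ∈ p.1 \ p.2, y0 i) / ((n - m : ℕ) : ℝ)) - (μ1 - μ0)) ^ 2) / (A.card : ℝ)
      = (1 / ((N : ℝ) - 1)) * (((N : ℝ) - m) / m * S1
          + ((N : ℝ) - ((n - m : ℕ) : ℝ)) / ((n - m : ℕ) : ℝ) * S0 + 2 * S10) := by
  intro μ1 μ0 S1 S0 S10 A
  have : Nontrivial (Fin N) := Fin.nontrivial_iff_two_le.2 (by omega)
  have hk : m + (n - m) = n := by omega
  have hA : (#A : ℝ) ≠ 0 := by
    have := designs_nonempty (α := Fin N) (n := n) (m := m) (by omega) (by simpa using hnN)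
    exact_mod_cast this.card_pos.ne'
  have hN2 : (2 : ℝ) ≤ N := by exact_mod_cast (by omega : 2 ≤ N)
  have hN : (N : ℝ) ≠ 0 := by linarith
  have hN1 : (N : ℝ) - 1 ≠ 0 := by linarith
  have hcentered (p) (hp : p ∈ A) :
      (∑ i ∈ p.2, y1 i) / (m : ℝ) - (∑ i ∈ p.1 \ p.2, y0 i) / ((n - m : ℕ) : ℝ) - (μ1 - μ0) =
        (∑ i ∈ p.2, (y1 i - μ1)) / m - (∑ i ∈ p.1 \ p.2, (y0 i - μ0)) / ((n - m : ℕ) : ℝ) := by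
    rw [sum_sub_const_div_eq (card_treated_of_mem_designs hp) (by omega),
      sum_sub_const_div_eq (card_control_of_mem_designs hk hp) (by omega)]
    ring
  have key := sum_sq_diffMeans_designs hk (by omega) (by omega) (fun i => y1 i - μ1)
    (fun i => y0 i - μ0) (by simpa using sum_sub_sum_div_card_eq_zero y1)
    (by simpa using sum_sub_sum_div_card_eq_zero y0)
  simp only [Fintype.card_fin, show designs (Fin N) n m = A from rfl] at key
  rw [sum_congr rfl fun p hp => by rw [hcentered p hp], div_eq_iff hA]
  apply mul_left_cancel₀ (mul_ne_zero hN hN1)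
  rw [key]
  simp only [S1, S0, S10]
  field_simp

/-- Variance of the difference-in-means estimator under complete randomization:
`V_N = (1/(N-1)) { ((N-m)/m) S²(y₁) + ((N-(n-m))/(n-m)) S²(y₀) + 2 S(y₁,y₀) }`. -/
theorem stmt1 (N n m : ℕ) (hN : 4 ≤ N) (hnN : n ≤ N) (hm : 2 ≤ m)
    (hmn : m + 2 ≤ n) (y1 y0 : Fin N → ℝ) :
    let μ1 := (∑ i, y1 i) / (N : ℝ)
    let μ0 := (∑ i, y0 i) / (N : ℝ)
    let S1 := (∑ i, (y1 i - μ1) ^ 2) / (N : ℝ)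
    let S0 := (∑ i, (y0 i - μ0) ^ 2) / (N : ℝ)
    let S10 := (∑ i, (y1 i - μ1) * (y0 i - μ0)) / (N : ℝ)
    let A : Finset (Finset (Fin N) × Finset (Fin N)) :=
      Finset.univ.filter (fun p => p.2 ⊆ p.1 ∧ p.1.card = n ∧ p.2.card = m)
    (∑ p ∈ A, (((∑ i ∈ p.2, y1 i) / (m : ℝ)
          - (∑ i ∈ p.1 \ p.2, y0 i) / ((n - m : ℕ) : ℝ)) - (μ1 - μ0)) ^ 2) / (A.card : ℝ)
      = (1 / ((N : ℝ) - 1)) * (((N : ℝ) - m) / m * S1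
          + ((N : ℝ) - ((n - m : ℕ) : ℝ)) / ((n - m : ℕ) : ℝ) * S0 + 2 * S10) :=
  stmt1_general N n m hnN hm hmn y1 y0
end

section
/- Neyman's conservative estimator V̂ₙᵃ = (n/(n−1))·{Ŝₙ²(y₁)/m + Ŝₙ²(y₀)/(n−m)} has nonnegative bias: E_X[V̂ₙᵃ − Vₙ] = (1/(n−1))·{Sₙ²(y₁) + Sₙ²(y₀) − 2Sₙ(y₁,y₀)} ≥ 0. -/
/-!
Averaged over all samples `T` of size `k` drawn from a population of size `N`, the within-sample
sum of squared deviations is `(k - 1) / (N - 1)` times the population one: it equals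
`(1 / 2k) ∑_{i,j ∈ T} (y i - y j) ^ 2`, and each pair `i ≠ j` lies in `C(N - 2, k - 2)` samples.
The control groups are the complements of the treated groups, hence run over all samples of size
`n - m`, so both `Ŝₙ²(y₁)` and `Ŝₙ²(y₀)` are unbiased. The bias of `V̂ₙᵃ` then reduces to
`(1 / (n (n - 1))) ∑ ((y₁ i - μ₁) - (y₀ i - μ₀)) ^ 2 ≥ 0`.
-/

open Finset

namespace Finset

variable {α : Type*}

theorem sum_powersetCard_sum_sum_of_diag_eq_zero [DecidableEq α] {M : Type*} [AddCommMonoid M]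
    (s : Finset α) {k : ℕ} (hk : 2 ≤ k) (f : α → α → M) (hf : ∀ i, f i i = 0) :
    ∑ T ∈ s.powersetCard k, ∑ i ∈ T, ∑ j ∈ T, f i j
      = (#s - 2).choose (k - 2) • ∑ i ∈ s, ∑ j ∈ s, f i j := by
  simp_rw [← sum_product', smul_sum]
  rw [sum_comm' (t' := s ×ˢ s) (s' := fun p => (s.powersetCard k).filter ({p.1, p.2} ⊆ ·))]
  · refine sum_congr rfl fun p hp => ?_
    rw [sum_const]
    obtain ⟨i, j⟩ := p
    obtain rfl | hij := eq_or_ne i j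
    · simp [hf]
    · rw [mem_product] at hp
      rw [card_filter_powersetCard_subset _ _ _ (insert_subset hp.1 (singleton_subset_iff.2 hp.2))
        (by rw [card_pair hij]; exact hk), card_pair hij]
  · intro T p
    simp only [mem_powersetCard, mem_product, mem_filter, insert_subset_iff,
      singleton_subset_iff]
    constructor
    · rintro ⟨⟨hTs, hT⟩, hi, hj⟩
      exact ⟨⟨⟨hTs, hT⟩, hi, hj⟩, hTs hi, hTs hj⟩
    · rintro ⟨⟨hT, hi, hj⟩, -⟩
      exact ⟨hT, hi, hj⟩

theorem sum_sum_sub_sq_eq_card_mul_sum_sq_sub_mean (s : Finset α) (y : α → ℝ) :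
    ∑ i ∈ s, ∑ j ∈ s, (y i - y j) ^ 2
      = 2 * #s * ∑ i ∈ s, (y i - (∑ j ∈ s, y j) / #s) ^ 2 := by
  obtain rfl | hs := s.eq_empty_or_nonempty
  · simp
  have : (#s : ℝ) ≠ 0 := by positivity
  simp only [sub_sq, sum_add_distrib, sum_sub_distrib, sum_const, nsmul_eq_mul, ← mul_sum,
    ← sum_mul]
  field_simp
  ring

theorem sum_powersetCard_sum_sq_sub_mean [DecidableEq α] (s : Finset α) (y : α → ℝ) {k : ℕ}
    (hk : 2 ≤ k) (hks : k ≤ #s) :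
    ∑ T ∈ s.powersetCard k, ∑ i ∈ T, (y i - (∑ j ∈ T, y j) / k) ^ 2
      = (#s).choose k * ((k - 1) / (#s - 1)) * ∑ i ∈ s, (y i - (∑ j ∈ s, y j) / #s) ^ 2 := by
  have hpairs : ∀ T ∈ s.powersetCard k, ∑ i ∈ T, (y i - (∑ j ∈ T, y j) / k) ^ 2
      = (2 * (k : ℝ))⁻¹ * ∑ i ∈ T, ∑ j ∈ T, (y i - y j) ^ 2 := by
    intro T hT
    have hk0 : (2 * k : ℝ) ≠ 0 := by positivity
    rw [sum_sum_sub_sq_eq_card_mul_sum_sq_sub_mean, (mem_powersetCard.1 hT).2, ← mul_assoc,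
      inv_mul_cancel₀ hk0, one_mul]
  rw [sum_congr rfl hpairs, ← mul_sum,
    sum_powersetCard_sum_sum_of_diag_eq_zero s hk _ (fun i => by simp),
    sum_sum_sub_sq_eq_card_mul_sum_sq_sub_mean, nsmul_eq_mul]
  generalize ∑ i ∈ s, (y i - (∑ j ∈ s, y j) / #s) ^ 2 = Q
  obtain ⟨a, ha⟩ : ∃ a, #s = a + 2 := ⟨#s - 2, by omega⟩
  obtain ⟨b, rfl⟩ : ∃ b, k = b + 2 := ⟨k - 2, by omega⟩
  have hchoose_succ : ((a + 2).choose (b + 2) : ℝ) * (b + 2) = (a + 2) * (a + 1).choose (b + 1) := by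
    exact_mod_cast (Nat.add_one_mul_choose_eq (a + 1) (b + 1)).symm
  have hchoose : ((a + 1).choose (b + 1) : ℝ) * (b + 1) = (a + 1) * a.choose b := by
    exact_mod_cast (Nat.add_one_mul_choose_eq a b).symm
  have hs1 : (#s : ℝ) - 1 = a + 1 := by rw [ha]; push_cast; ring
  rw [hs1, ha, Nat.add_sub_cancel]
  push_cast
  field_simp
  linear_combination -Q * ((b + 1) * hchoose_succ + (a + 2) * hchoose)

theorem sum_powersetCard_compl [Fintype α] [DecidableEq α] {M : Type*} [AddCommMonoid M]
    {k : ℕ} (hk : k ≤ Fintype.card α) (f : Finset α → M) :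
    ∑ T ∈ powersetCard k univ, f Tᶜ = ∑ T ∈ powersetCard (Fintype.card α - k) univ, f T := by
  refine sum_nbij' compl compl (fun T hT => ?_) (fun T hT => ?_) (fun T _ => compl_compl T)
    (fun T _ => compl_compl T) (fun T _ => rfl) <;>
  · simp only [mem_powersetCard_univ, card_compl] at hT ⊢
    omega

end Finset

/-- Neyman's conservative estimator `V̂ₙᵃ` has bias
`(1/(n-1)) { Sₙ²(y₁) + Sₙ²(y₀) - 2 Sₙ(y₁,y₀) } ≥ 0` (complete randomization
of all `n = N` units, treated group `T` of size `m`, control its complement). -/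
theorem stmt3 (n m : ℕ) (hm : 2 ≤ m) (hmn : m + 2 ≤ n) (y1 y0 : Fin n → ℝ) :
    let μ1 := (∑ i, y1 i) / (n : ℝ)
    let μ0 := (∑ i, y0 i) / (n : ℝ)
    let S1 := (∑ i, (y1 i - μ1) ^ 2) / (n : ℝ)
    let S0 := (∑ i, (y0 i - μ0) ^ 2) / (n : ℝ)
    let S10 := (∑ i, (y1 i - μ1) * (y0 i - μ0)) / (n : ℝ)
    let Vn := (1 / ((n : ℝ) - 1)) * (((n : ℝ) - m) / m * S1
        + (m : ℝ) / ((n - m : ℕ) : ℝ) * S0 + 2 * S10)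
    let A := Finset.powersetCard m (Finset.univ : Finset (Fin n))
    let Va : Finset (Fin n) → ℝ := fun T =>
      ((n : ℝ) / ((n : ℝ) - 1)) *
        ((((n : ℝ) - 1) / ((n : ℝ) * ((m : ℝ) - 1))
            * ∑ i ∈ T, (y1 i - (∑ j ∈ T, y1 j) / (m : ℝ)) ^ 2) / (m : ℝ)
         + (((n : ℝ) - 1) / ((n : ℝ) * (((n - m : ℕ) : ℝ) - 1))
            * ∑ i ∈ Tᶜ, (y0 i - (∑ j ∈ Tᶜ, y0 j) / ((n - m : ℕ) : ℝ)) ^ 2)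
              / ((n - m : ℕ) : ℝ))
    ((∑ T ∈ A, Va T) / (A.card : ℝ)) - Vn
        = (1 / ((n : ℝ) - 1)) * (S1 + S0 - 2 * S10)
      ∧ 0 ≤ (1 / ((n : ℝ) - 1)) * (S1 + S0 - 2 * S10) := by
  intro μ1 μ0 S1 S0 S10 Vn A Va
  have htreated := sum_powersetCard_sum_sq_sub_mean univ y1 hm (by rw [card_fin]; omega)
  have hcontrol := sum_powersetCard_sum_sq_sub_mean univ y0 (k := n - m) (by omega) (by simp)
  have hcompl := sum_powersetCard_compl (α := Fin n) (k := m) (by simp; omega)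
    fun S => ∑ i ∈ S, (y0 i - (∑ j ∈ S, y0 j) / ((n - m : ℕ) : ℝ)) ^ 2
  rw [card_fin] at htreated hcontrol
  rw [Fintype.card_fin] at hcompl
  have hA : (A.card : ℝ) = n.choose m := by simp [A]
  rw [Nat.choose_symm (by omega)] at hcontrol
  have hm2 : (2 : ℝ) ≤ m := by exact_mod_cast hm
  have hmn2 : (m : ℝ) + 2 ≤ n := by exact_mod_cast hmn
  have hdiff : S1 + S0 - 2 * S10 = (∑ i, ((y1 i - μ1) - (y0 i - μ0)) ^ 2) / n := by
    simp only [S1, S0, S10]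
    rw [← add_div, mul_div_assoc', div_sub_div_same, mul_sum, ← sum_add_distrib,
      ← sum_sub_distrib]
    exact congrArg (· / (n : ℝ)) (sum_congr rfl fun i _ => by ring)
  refine ⟨?_, mul_nonneg (one_div_nonneg.2 (by linarith)) (hdiff ▸ by positivity)⟩
  simp only [A, Va, ← mul_sum, sum_add_distrib, ← sum_div] at hA ⊢
  rw [hcompl, htreated, hcontrol, hA]
  have hC : (n.choose m : ℝ) ≠ 0 := by exact_mod_cast (Nat.choose_pos (by omega : m ≤ n)).ne'
  simp only [Vn, S1, S0, S10, μ1, μ0]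
  rw [Nat.cast_sub (by omega)]
  generalize ∑ i, (y1 i - (∑ j, y1 j) / n) ^ 2 = P1
  generalize ∑ i, (y0 i - (∑ j, y0 j) / n) ^ 2 = P0
  have hn1 : (n : ℝ) - 1 ≠ 0 := by linarith
  have hm1 : (m : ℝ) - 1 ≠ 0 := by linarith
  have hnm : (n : ℝ) - m ≠ 0 := by linarith
  have hnm1 : (n : ℝ) - m - 1 ≠ 0 := by linarith
  field_simp
  ring
end

section
/- For any two distribution functions G and F on ℝ with common bivariate couplings, E_{H^L}[XY] ≤ E_H[XY] ≤ E_{H^H}[XY] for every joint distribution H with marginals G and F, where H^H(x,y) = min{G(x),F(y)} and H^L(x,y) = max{0, G(x)+F(y)−1}, provided the relevant expectations exist. -/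
open MeasureTheory

/-!
Hoeffding's identity: with `k x s = 𝟙[0 ≤ s] - 𝟙[x ≤ s]` one has `x = ∫ k x s ds`, so by Fubini
`E[XY] = ∫∫ E[k X s * k Y t] ds dt`. Expanding the product, the inner expectation is
`H(s, t)` plus terms that depend only on the marginals. Hence, among couplings of `G` and `F`
with integrable `XY`, `E[XY]` is monotone in the joint distribution function. The Fréchet
inequalities `H^L ≤ H ≤ H^H` hold pointwise for every coupling `H`, and `H^L`, `H^H` are
themselves couplings of `G` and `F`, because `min a 1 = max 0 (a + 1 - 1) = a` on `[0, 1]`.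
-/

open Set Filter Topology Function

section ProdMeasure

variable {α β : Type*} [MeasurableSpace α] [MeasurableSpace β] (μ : Measure (α × β))

theorem tendsto_measureReal_prod_Iic_atTop [IsFiniteMeasure μ] [Preorder β]
    [(atTop : Filter β).IsCountablyGenerated] (A : Set α) :
    Tendsto (fun t => μ.real (A ×ˢ Iic t)) atTop (𝓝 (μ.real (A ×ˢ univ))) := by
  have h := tendsto_measure_iUnion_atTop (μ := μ) (s := fun t : β => A ×ˢ Iic t)
    fun _ _ hst => prod_mono subset_rfl (Iic_subset_Iic.2 hst)
  rw [← prod_iUnion, iUnion_Iic] at h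
  exact (ENNReal.tendsto_toReal (measure_ne_top μ _)).comp h

theorem tendsto_measureReal_Iic_prod_atTop [IsFiniteMeasure μ] [Preorder α]
    [(atTop : Filter α).IsCountablyGenerated] (B : Set β) :
    Tendsto (fun s => μ.real (Iic s ×ˢ B)) atTop (𝓝 (μ.real (univ ×ˢ B))) := by
  have h := tendsto_measure_iUnion_atTop (μ := μ) (s := fun s : α => Iic s ×ˢ B)
    fun _ _ hst => prod_mono (Iic_subset_Iic.2 hst) subset_rfl
  rw [← iUnion_prod_const, iUnion_Iic] at h
  exact (ENNReal.tendsto_toReal (measure_ne_top μ _)).comp h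

theorem measureReal_prod_le_min [IsFiniteMeasure μ] (A : Set α) (B : Set β) :
    μ.real (A ×ˢ B) ≤ min (μ.real (A ×ˢ univ)) (μ.real (univ ×ˢ B)) :=
  le_min (measureReal_mono (prod_mono subset_rfl (subset_univ B)))
    (measureReal_mono (prod_mono (subset_univ A) subset_rfl))

theorem measureReal_prod_univ_add_measureReal_univ_prod_sub_one_le [IsProbabilityMeasure μ]
    (A : Set α) {B : Set β} (hB : MeasurableSet B) :
    μ.real (A ×ˢ univ) + μ.real (univ ×ˢ B) - 1 ≤ μ.real (A ×ˢ B) := by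
  have h := measureReal_union_add_inter (μ := μ) (s := A ×ˢ univ) (MeasurableSet.univ.prod hB)
  rw [prod_inter_prod, inter_univ, univ_inter] at h
  linarith [measureReal_le_one (μ := μ) (s := A ×ˢ univ ∪ univ ×ˢ B)]

end ProdMeasure

theorem measureReal_Iic_prod_univ_of_copula (μ : Measure (ℝ × ℝ)) [IsFiniteMeasure μ]
    {G F : ℝ → ℝ} {C : ℝ → ℝ → ℝ} (hC : ∀ a, Continuous (C a))
    (hC1 : ∀ a ∈ Icc (0 : ℝ) 1, C a 1 = a) (hG : ∀ x, G x ∈ Icc 0 1)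
    (hF : Tendsto F atTop (𝓝 1)) (hμ : ∀ x y, μ.real (Iic x ×ˢ Iic y) = C (G x) (F y))
    (x : ℝ) : μ.real (Iic x ×ˢ univ) = G x := by
  refine tendsto_nhds_unique (tendsto_measureReal_prod_Iic_atTop μ (Iic x)) ?_
  have h := ((hC (G x)).tendsto 1).comp hF
  rw [hC1 _ (hG x)] at h
  exact h.congr fun y => (hμ x y).symm

theorem measureReal_univ_prod_Iic_of_copula (μ : Measure (ℝ × ℝ)) [IsFiniteMeasure μ]
    {G F : ℝ → ℝ} {C : ℝ → ℝ → ℝ} (hC : ∀ b, Continuous (C · b))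
    (hC1 : ∀ b ∈ Icc (0 : ℝ) 1, C 1 b = b) (hF : ∀ y, F y ∈ Icc 0 1)
    (hG : Tendsto G atTop (𝓝 1)) (hμ : ∀ x y, μ.real (Iic x ×ˢ Iic y) = C (G x) (F y))
    (y : ℝ) : μ.real (univ ×ˢ Iic y) = F y := by
  refine tendsto_nhds_unique (tendsto_measureReal_Iic_prod_atTop μ (Iic y)) ?_
  have h := ((hC (F y)).tendsto 1).comp hG
  rw [hC1 _ (hF y)] at h
  exact h.congr fun x => (hμ x y).symm

noncomputable def hoeffdingKernel (x s : ℝ) : ℝ :=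
  (Iic s).indicator 1 0 - (Iic s).indicator 1 x

theorem hoeffdingKernel_eq_indicator_Ico_sub (x s : ℝ) :
    hoeffdingKernel x s = (Ico 0 x).indicator 1 s - (Ico x 0).indicator 1 s := by
  rcases le_or_gt 0 s with hs | hs <;> rcases le_or_gt x s with hx | hx <;>
    simp [hoeffdingKernel, indicator, hs, hx, not_le.2, not_lt.2]

theorem abs_hoeffdingKernel (x s : ℝ) :
    |hoeffdingKernel x s| = (Ico 0 x).indicator 1 s + (Ico x 0).indicator 1 s := by
  rcases le_or_gt 0 s with hs | hs <;> rcases le_or_gt x s with hx | hx <;>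
    simp [hoeffdingKernel, indicator, hs, hx, not_le.2, not_lt.2]

theorem integrable_indicator_Ico_one (a b : ℝ) : Integrable ((Ico a b).indicator (1 : ℝ → ℝ)) :=
  (integrable_indicator_iff measurableSet_Ico).2 (integrableOn_const measure_Ico_lt_top.ne)

theorem integrable_hoeffdingKernel (x : ℝ) : Integrable (hoeffdingKernel x) := by
  simp_rw [funext (hoeffdingKernel_eq_indicator_Ico_sub x)]
  exact (integrable_indicator_Ico_one 0 x).sub (integrable_indicator_Ico_one x 0)

theorem integral_hoeffdingKernel (x : ℝ) : ∫ s, hoeffdingKernel x s = x := by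
  simp_rw [hoeffdingKernel_eq_indicator_Ico_sub]
  rw [integral_sub (integrable_indicator_Ico_one 0 x) (integrable_indicator_Ico_one x 0),
    integral_indicator_one measurableSet_Ico, integral_indicator_one measurableSet_Ico,
    Real.volume_real_Ico, Real.volume_real_Ico, sub_zero, zero_sub, max_zero_sub_eq_self]

theorem integral_abs_hoeffdingKernel (x : ℝ) : ∫ s, |hoeffdingKernel x s| = |x| := by
  simp_rw [abs_hoeffdingKernel]
  rw [integral_add (integrable_indicator_Ico_one 0 x) (integrable_indicator_Ico_one x 0),
    integral_indicator_one measurableSet_Ico, integral_indicator_one measurableSet_Ico,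
    Real.volume_real_Ico, Real.volume_real_Ico, sub_zero, zero_sub]
  rcases le_total 0 x with h | h <;> simp [h, abs_of_nonneg, abs_of_nonpos]

theorem measurable_hoeffdingKernel : Measurable (uncurry hoeffdingKernel) := by
  have h : Measurable fun q : ℝ × ℝ => (Iic q.2).indicator (1 : ℝ → ℝ) q.1 := by
    simp only [indicator_apply, mem_Iic]
    exact Measurable.ite (measurableSet_le measurable_fst measurable_snd)
      measurable_const measurable_const
  have h0 : Measurable fun q : ℝ × ℝ => (Iic q.2).indicator (1 : ℝ → ℝ) 0 := by
    simp only [indicator_apply, mem_Iic]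
    exact Measurable.ite (measurableSet_le measurable_const measurable_snd)
      measurable_const measurable_const
  exact h0.sub h

theorem integral_sub_indicator_mul_sub_indicator {Ω : Type*} [MeasurableSpace Ω] (μ : Measure Ω)
    [IsProbabilityMeasure μ] {A B : Set Ω} (hA : MeasurableSet A) (hB : MeasurableSet B)
    (c d : ℝ) :
    ∫ ω, (c - A.indicator 1 ω) * (d - B.indicator 1 ω) ∂μ
      = μ.real (A ∩ B) - d * μ.real A - c * μ.real B + c * d := by
  have iA : Integrable (A.indicator (1 : Ω → ℝ)) μ := (integrable_const 1).indicator hA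
  have iB : Integrable (B.indicator (1 : Ω → ℝ)) μ := (integrable_const 1).indicator hB
  have iAB : Integrable ((A ∩ B).indicator (1 : Ω → ℝ)) μ :=
    (integrable_const 1).indicator (hA.inter hB)
  have hexpand : ∀ ω, (c - A.indicator 1 ω) * (d - B.indicator 1 ω)
      = (A ∩ B).indicator 1 ω - d * A.indicator 1 ω - c * B.indicator 1 ω + c * d := by
    intro ω
    rw [inter_indicator_one, Pi.mul_apply]
    ring
  simp_rw [hexpand]
  rw [integral_add (by fun_prop) (by fun_prop), integral_sub (by fun_prop) (by fun_prop),
    integral_sub iAB (by fun_prop),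
    integral_const_mul, integral_const_mul, integral_indicator_one hA, integral_indicator_one hB,
    integral_indicator_one (hA.inter hB), integral_const, probReal_univ, one_smul]

noncomputable def hoeffdingIntegrand (μ : Measure (ℝ × ℝ)) (z : ℝ × ℝ) : ℝ :=
  ∫ p, hoeffdingKernel p.1 z.1 * hoeffdingKernel p.2 z.2 ∂μ

theorem hoeffdingIntegrand_eq (μ : Measure (ℝ × ℝ)) [IsProbabilityMeasure μ] (z : ℝ × ℝ) :
    hoeffdingIntegrand μ z = μ.real (Iic z.1 ×ˢ Iic z.2)
      - (Iic z.2).indicator 1 0 * μ.real (Iic z.1 ×ˢ univ)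
      - (Iic z.1).indicator 1 0 * μ.real (univ ×ˢ Iic z.2)
      + (Iic z.1).indicator 1 0 * (Iic z.2).indicator 1 0 := by
  have hprod : (Iic z.1 ×ˢ univ) ∩ (univ ×ˢ Iic z.2) = Iic z.1 ×ˢ Iic z.2 := by
    rw [prod_inter_prod, inter_univ, univ_inter]
  rw [← hprod, ← integral_sub_indicator_mul_sub_indicator μ (measurableSet_Iic.prod .univ)
    (MeasurableSet.univ.prod measurableSet_Iic)]
  unfold hoeffdingIntegrand
  refine integral_congr_ae (.of_forall fun ⟨x, y⟩ => ?_)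
  simp only [hoeffdingKernel, indicator_prod_one, indicator_univ, Pi.one_apply, mul_one, one_mul]

theorem integrable_hoeffdingKernel_mul_prod (μ : Measure (ℝ × ℝ))
    (hμ : Integrable (fun p : ℝ × ℝ => p.1 * p.2) μ) :
    Integrable (uncurry fun p z : ℝ × ℝ => hoeffdingKernel p.1 z.1 * hoeffdingKernel p.2 z.2)
      (μ.prod volume) := by
  have hmeas : Measurable (uncurry fun p z : ℝ × ℝ =>
      hoeffdingKernel p.1 z.1 * hoeffdingKernel p.2 z.2) :=
    (measurable_hoeffdingKernel.comp (measurable_fst.fst.prodMk measurable_snd.fst)).mul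
      (measurable_hoeffdingKernel.comp (measurable_fst.snd.prodMk measurable_snd.snd))
  rw [integrable_prod_iff hmeas.aestronglyMeasurable, Measure.volume_eq_prod]
  refine ⟨.of_forall fun p => (integrable_hoeffdingKernel p.1).mul_prod
    (integrable_hoeffdingKernel p.2), hμ.norm.congr (.of_forall fun p => ?_)⟩
  simp only [uncurry_apply_pair, norm_mul, Real.norm_eq_abs]
  rw [integral_prod_mul (fun s => |hoeffdingKernel p.1 s|) (fun t => |hoeffdingKernel p.2 t|),
    integral_abs_hoeffdingKernel, integral_abs_hoeffdingKernel]

theorem integrable_hoeffdingIntegrand (μ : Measure (ℝ × ℝ)) [SFinite μ]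
    (hμ : Integrable (fun p : ℝ × ℝ => p.1 * p.2) μ) : Integrable (hoeffdingIntegrand μ) :=
  (integrable_hoeffdingKernel_mul_prod μ hμ).integral_prod_right

theorem integral_hoeffdingIntegrand (μ : Measure (ℝ × ℝ)) [SFinite μ]
    (hμ : Integrable (fun p : ℝ × ℝ => p.1 * p.2) μ) :
    ∫ z, hoeffdingIntegrand μ z = ∫ p, p.1 * p.2 ∂μ := by
  unfold hoeffdingIntegrand
  rw [← integral_integral_swap (integrable_hoeffdingKernel_mul_prod μ hμ)]
  refine integral_congr_ae (.of_forall fun p => ?_)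
  dsimp only
  rw [Measure.volume_eq_prod,
    integral_prod_mul (hoeffdingKernel p.1) (hoeffdingKernel p.2),
    integral_hoeffdingKernel, integral_hoeffdingKernel]

theorem integral_fst_mul_snd_le_of_measureReal_Iic_prod_le (μ ν : Measure (ℝ × ℝ))
    [IsProbabilityMeasure μ] [IsProbabilityMeasure ν]
    (hμ : Integrable (fun p : ℝ × ℝ => p.1 * p.2) μ)
    (hν : Integrable (fun p : ℝ × ℝ => p.1 * p.2) ν)
    (hfst : ∀ x, μ.real (Iic x ×ˢ univ) = ν.real (Iic x ×ˢ univ))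
    (hsnd : ∀ y, μ.real (univ ×ˢ Iic y) = ν.real (univ ×ˢ Iic y))
    (hle : ∀ x y, μ.real (Iic x ×ˢ Iic y) ≤ ν.real (Iic x ×ˢ Iic y)) :
    ∫ p, p.1 * p.2 ∂μ ≤ ∫ p, p.1 * p.2 ∂ν := by
  rw [← integral_hoeffdingIntegrand μ hμ, ← integral_hoeffdingIntegrand ν hν]
  refine integral_mono (integrable_hoeffdingIntegrand μ hμ)
    (integrable_hoeffdingIntegrand ν hν) fun z => ?_
  rw [hoeffdingIntegrand_eq, hoeffdingIntegrand_eq, hfst, hsnd]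
  linarith [hle z.1 z.2]

/-- Hoeffding–Fréchet bounds: for any joint distribution `ν` with marginal
distribution functions `G` and `F`, the expectation of the product is
sandwiched between the expectations under the lower Fréchet bound
`H^L(x,y) = max{0, G(x)+F(y)-1}` and the upper Fréchet bound
`H^H(x,y) = min{G(x), F(y)}`. -/
theorem stmt7 (G F : ℝ → ℝ) (ν μH μL : Measure (ℝ × ℝ))
    [IsProbabilityMeasure ν] [IsProbabilityMeasure μH] [IsProbabilityMeasure μL]
    (hνG : ∀ x : ℝ, (ν (Set.Iic x ×ˢ Set.univ)).toReal = G x)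
    (hνF : ∀ y : ℝ, (ν (Set.univ ×ˢ Set.Iic y)).toReal = F y)
    (hH : ∀ x y : ℝ, (μH (Set.Iic x ×ˢ Set.Iic y)).toReal = min (G x) (F y))
    (hL : ∀ x y : ℝ, (μL (Set.Iic x ×ˢ Set.Iic y)).toReal = max 0 (G x + F y - 1))
    (hi : Integrable (fun p : ℝ × ℝ => p.1 * p.2) ν)
    (hiH : Integrable (fun p : ℝ × ℝ => p.1 * p.2) μH)
    (hiL : Integrable (fun p : ℝ × ℝ => p.1 * p.2) μL) :
    (∫ p, p.1 * p.2 ∂μL) ≤ (∫ p, p.1 * p.2 ∂ν) ∧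
    (∫ p, p.1 * p.2 ∂ν) ≤ (∫ p, p.1 * p.2 ∂μH) := by
  simp only [← measureReal_def] at hνG hνF hH hL
  have hG : ∀ x, G x ∈ Icc 0 1 := fun x => hνG x ▸ ⟨measureReal_nonneg, measureReal_le_one⟩
  have hF : ∀ y, F y ∈ Icc 0 1 := fun y => hνF y ▸ ⟨measureReal_nonneg, measureReal_le_one⟩
  have hG1 : Tendsto G atTop (𝓝 1) := by
    simpa [hνG] using tendsto_measureReal_Iic_prod_atTop ν (univ : Set ℝ)
  have hF1 : Tendsto F atTop (𝓝 1) := by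
    simpa [hνF] using tendsto_measureReal_prod_Iic_atTop ν (univ : Set ℝ)
  have hHG := measureReal_Iic_prod_univ_of_copula μH (C := min) (by fun_prop)
    (fun a ha => min_eq_left ha.2) hG hF1 hH
  have hHF := measureReal_univ_prod_Iic_of_copula μH (C := min) (by fun_prop)
    (fun b hb => min_eq_right hb.2) hF hG1 hH
  have hLG := measureReal_Iic_prod_univ_of_copula μL (C := fun a b => max 0 (a + b - 1))
    (by fun_prop) (fun a ha => by simp [ha.1]) hG hF1 hL
  have hLF := measureReal_univ_prod_Iic_of_copula μL (C := fun a b => max 0 (a + b - 1))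
    (by fun_prop) (fun b hb => by simp [hb.1]) hF hG1 hL
  constructor
  · refine integral_fst_mul_snd_le_of_measureReal_Iic_prod_le μL ν hiL hi
      (fun x => by rw [hLG, hνG]) (fun y => by rw [hLF, hνF]) fun x y => ?_
    rw [hL, ← hνG, ← hνF]
    exact max_le measureReal_nonneg
      (measureReal_prod_univ_add_measureReal_univ_prod_sub_one_le ν _ measurableSet_Iic)
  · refine integral_fst_mul_snd_le_of_measureReal_Iic_prod_le ν μH hi hiH
      (fun x => by rw [hHG, hνG]) (fun y => by rw [hHF, hνF]) fun x y => ?_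
    rw [hH, ← hνG, ← hνF]
    exact measureReal_prod_le_min ν _ _
end

section
/- For random variables X, Y bounded by C (|X|, |Y| ≤ C a.s.) with joint distribution function H and marginals G, F, the covariance admits Hoeffding's representation: E[XY] − E[X]E[Y] = ∫_{−C}^{C}∫_{−C}^{C} {H(x,y) − G(x)F(y)} dx dy. -/
/-!
For `t ∈ [a, b]` we have `b - t = ∫_{(a, b]} 1{t ≤ x} dx`. For `X ∈ [a, b]`, `Y ∈ [c, d]`,
plugging in `t = X`, `t = Y` and using Fubini gives `E[b - X] = ∫ G`, `E[d - Y] = ∫ F` and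
`E[(b - X)(d - Y)] = ∫∫ H`. Since the covariance does not change under `X ↦ b - X`,
`Y ↦ d - Y`, this gives `Cov(X, Y) = ∫∫ H - ∫ G ∫ F = ∫∫ (H - G F)`.
-/

open MeasureTheory ProbabilityTheory Set

section Fubini

variable {Ω : Type*} [MeasurableSpace Ω] {P : Measure Ω}
  {ν : Measure ℝ} [IsFiniteMeasure ν] {X g : Ω → ℝ}

lemma integrable_indicator_setOf_le_prod (hX : Measurable X) (hg : Integrable g P) :
    Integrable (fun p : Ω × ℝ => {ω | X ω ≤ p.2}.indicator g p.1) (P.prod ν) :=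
  (hg.comp_fst ν).indicator (measurableSet_le (hX.comp measurable_fst) measurable_snd)

variable [SFinite P]

lemma integrable_integral_indicator_setOf_le (hX : Measurable X) (hg : Integrable g P) :
    Integrable (fun x => ∫ ω, {ω | X ω ≤ x}.indicator g ω ∂P) ν :=
  (integrable_indicator_setOf_le_prod hX hg).integral_prod_right

lemma integral_integral_indicator_setOf_le (hX : Measurable X) (hg : Integrable g P) :
    ∫ x, ∫ ω, {ω | X ω ≤ x}.indicator g ω ∂P ∂ν = ∫ ω, ν.real (Ici (X ω)) * g ω ∂P := by
  rw [← integral_integral_swap (integrable_indicator_setOf_le_prod hX hg)]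
  congr 1 with ω
  rw [← smul_eq_mul, ← integral_indicator_const _ measurableSet_Ici]
  rfl

end Fubini

lemma measureReal_restrict_Ioc_Ici {a b t : ℝ} (ht : t ∈ Icc a b) :
    (volume.restrict (Ioc a b)).real (Ici t) = b - t := by
  have : volume (Ici t ∩ Ioc a b) = ENNReal.ofReal (b - t) := by
    refine le_antisymm ?_ ?_
    · rw [← Real.volume_Icc]
      exact measure_mono fun x hx => ⟨hx.1, hx.2.2⟩
    · rw [← Real.volume_Ioc]
      exact measure_mono fun x hx => ⟨hx.1.le, ht.1.trans_lt hx.1, hx.2⟩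
  rw [measureReal_def, Measure.restrict_apply measurableSet_Ici, this,
    ENNReal.toReal_ofReal (sub_nonneg.2 ht.2)]

section Distribution

variable {Ω : Type*} [MeasurableSpace Ω] {P : Measure Ω} {X Y : Ω → ℝ} {a b c d : ℝ}

lemma measureReal_setOf_le_eq_integral (hX : Measurable X) (x : ℝ) :
    P.real {ω | X ω ≤ x} = ∫ ω, {ω | X ω ≤ x}.indicator (fun _ => 1) ω ∂P := by
  rw [integral_indicator_const _ (measurableSet_le hX measurable_const), smul_eq_mul, mul_one]

lemma measureReal_setOf_le_and_le_eq_integral (hX : Measurable X) (hY : Measurable Y) (x y : ℝ) :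
    P.real {ω | X ω ≤ x ∧ Y ω ≤ y} =
      ∫ ω, {ω | Y ω ≤ y}.indicator ({ω | X ω ≤ x}.indicator fun _ => 1) ω ∂P := by
  rw [indicator_indicator, integral_indicator_const _
    ((measurableSet_le hY measurable_const).inter (measurableSet_le hX measurable_const)),
    smul_eq_mul, mul_one, inter_comm]
  rfl

variable [IsFiniteMeasure P]

lemma memLp_of_forall_mem_Icc (hX : Measurable X) (hXab : ∀ ω, X ω ∈ Icc a b)
    (p : ENNReal) : MemLp X p P :=
  MemLp.of_bound hX.aestronglyMeasurable _
    (ae_of_all _ fun ω => abs_le_max_abs_abs (hXab ω).1 (hXab ω).2)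

lemma integrable_measureReal_setOf_le (hX : Measurable X) (ν : Measure ℝ) [IsFiniteMeasure ν] :
    Integrable (fun x => P.real {ω | X ω ≤ x}) ν := by
  simpa only [← measureReal_setOf_le_eq_integral hX] using
    integrable_integral_indicator_setOf_le (ν := ν) hX (integrable_const (μ := P) 1)

lemma integrable_measureReal_setOf_le_and_le (hX : Measurable X) (hY : Measurable Y) (x : ℝ)
    (ν : Measure ℝ) [IsFiniteMeasure ν] :
    Integrable (fun y => P.real {ω | X ω ≤ x ∧ Y ω ≤ y}) ν := by
  simpa only [← measureReal_setOf_le_and_le_eq_integral hX hY] using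
    integrable_integral_indicator_setOf_le (ν := ν) hY
      ((integrable_const (μ := P) 1).indicator (measurableSet_le hX measurable_const))

lemma setIntegral_Ioc_integral_indicator_setOf_le {g : Ω → ℝ} (hX : Measurable X)
    (hXab : ∀ ω, X ω ∈ Icc a b) (hg : Integrable g P) :
    ∫ x in Ioc a b, ∫ ω, {ω | X ω ≤ x}.indicator g ω ∂P = ∫ ω, (b - X ω) * g ω ∂P := by
  simp only [integral_integral_indicator_setOf_le hX hg, measureReal_restrict_Ioc_Ici (hXab _)]

lemma setIntegral_Ioc_measureReal_setOf_le (hX : Measurable X) (hXab : ∀ ω, X ω ∈ Icc a b) :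
    ∫ x in Ioc a b, P.real {ω | X ω ≤ x} = ∫ ω, (b - X ω) ∂P := by
  simp only [measureReal_setOf_le_eq_integral hX,
    setIntegral_Ioc_integral_indicator_setOf_le hX hXab (integrable_const 1), mul_one]

lemma setIntegral_Ioc_measureReal_setOf_le_and_le (hX : Measurable X) (hY : Measurable Y)
    (hYcd : ∀ ω, Y ω ∈ Icc c d) (x : ℝ) :
    ∫ y in Ioc c d, P.real {ω | X ω ≤ x ∧ Y ω ≤ y} =
      ∫ ω, {ω | X ω ≤ x}.indicator (fun ω => d - Y ω) ω ∂P := by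
  simp only [measureReal_setOf_le_and_le_eq_integral hX hY,
    setIntegral_Ioc_integral_indicator_setOf_le hY hYcd
      ((integrable_const 1).indicator (measurableSet_le hX measurable_const))]
  simp only [indicator_apply, mul_ite, mul_one, mul_zero]

lemma covariance_eq_setIntegral_Ioc_cdf [IsProbabilityMeasure P] (hX : Measurable X)
    (hY : Measurable Y) (hXab : ∀ ω, X ω ∈ Icc a b) (hYcd : ∀ ω, Y ω ∈ Icc c d) :
    cov[X, Y; P] = ∫ x in Ioc a b, ∫ y in Ioc c d,
      (P.real {ω | X ω ≤ x ∧ Y ω ≤ y} - P.real {ω | X ω ≤ x} * P.real {ω | Y ω ≤ y}) := by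
  have hX2 := memLp_of_forall_mem_Icc (P := P) hX hXab 2
  have hY2 := memLp_of_forall_mem_Icc (P := P) hY hYcd 2
  have hbX : MemLp (fun ω => b - X ω) 2 P := (memLp_const b).sub hX2
  have hdY : MemLp (fun ω => d - Y ω) 2 P := (memLp_const d).sub hY2
  have hcov : cov[X, Y; P] = ∫ ω, (b - X ω) * (d - Y ω) ∂P
      - (∫ ω, (b - X ω) ∂P) * ∫ ω, (d - Y ω) ∂P := by
    rw [← neg_neg cov[X, Y; P], ← covariance_const_sub_right (hY2.integrable one_le_two) d,
      ← covariance_const_sub_left (hX2.integrable one_le_two) b, covariance_eq_sub hbX hdY]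
    rfl
  have hH := setIntegral_Ioc_measureReal_setOf_le_and_le (P := P) hX hY hYcd
  have hH_int : Integrable (fun x => ∫ y in Ioc c d, P.real {ω | X ω ≤ x ∧ Y ω ≤ y})
      (volume.restrict (Ioc a b)) := by
    simpa only [hH] using integrable_integral_indicator_setOf_le hX (hdY.integrable one_le_two)
  calc cov[X, Y; P]
    _ = (∫ x in Ioc a b, ∫ y in Ioc c d, P.real {ω | X ω ≤ x ∧ Y ω ≤ y})
        - (∫ x in Ioc a b, P.real {ω | X ω ≤ x}) * ∫ y in Ioc c d, P.real {ω | Y ω ≤ y} := by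
      rw [hcov, setIntegral_Ioc_measureReal_setOf_le hX hXab,
        setIntegral_Ioc_measureReal_setOf_le hY hYcd]
      simp only [hH, setIntegral_Ioc_integral_indicator_setOf_le hX hXab
        (hdY.integrable one_le_two)]
    _ = ∫ x in Ioc a b, ((∫ y in Ioc c d, P.real {ω | X ω ≤ x ∧ Y ω ≤ y})
        - P.real {ω | X ω ≤ x} * ∫ y in Ioc c d, P.real {ω | Y ω ≤ y}) := by
      rw [integral_sub hH_int ((integrable_measureReal_setOf_le hX _).mul_const _),
        integral_mul_const]
    _ = _ := by
      congr 1 with x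
      rw [integral_sub (integrable_measureReal_setOf_le_and_le hX hY x _)
        ((integrable_measureReal_setOf_le hY _).const_mul _), integral_const_mul]

end Distribution

/-- Hoeffding's covariance identity: for random variables `X, Y` bounded by
`C`, `Cov(X,Y) = ∫_{-C}^{C} ∫_{-C}^{C} { H(x,y) - G(x) F(y) } dx dy`, where
`H` is the joint distribution function and `G, F` the marginals. -/
theorem stmt8 (Ω : Type*) [MeasurableSpace Ω] (P : Measure Ω) [IsProbabilityMeasure P]
    (X Y : Ω → ℝ) (hX : Measurable X) (hY : Measurable Y) (C : ℝ)
    (hXb : ∀ ω, |X ω| ≤ C) (hYb : ∀ ω, |Y ω| ≤ C) :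
    (∫ ω, X ω * Y ω ∂P) - (∫ ω, X ω ∂P) * (∫ ω, Y ω ∂P) =
      ∫ x in (-C)..C, ∫ y in (-C)..C,
        ((P {ω | X ω ≤ x ∧ Y ω ≤ y}).toReal
          - (P {ω | X ω ≤ x}).toReal * (P {ω | Y ω ≤ y}).toReal) := by
  have hXC : ∀ ω, X ω ∈ Icc (-C) C := fun ω => abs_le.1 (hXb ω)
  have hYC : ∀ ω, Y ω ∈ Icc (-C) C := fun ω => abs_le.1 (hYb ω)
  obtain ⟨ω⟩ := nonempty_of_isProbabilityMeasure P
  have hC : -C ≤ C := (hXC ω).1.trans (hXC ω).2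
  simp only [intervalIntegral.integral_of_le hC]
  exact (covariance_eq_sub (memLp_of_forall_mem_Icc hX hXC 2)
    (memLp_of_forall_mem_Icc hY hYC 2)).symm.trans (covariance_eq_setIntegral_Ioc_cdf hX hY hXC hYC)
end

section
/- The plug-in sharp upper covariance estimator satisfies Ŝ_N^H(y₁,y₀) = Σ_{i=1}^P (p_i − p_{i−1})·y_{1[i]}·y_{0[i]} − μ̂_N(y₁)μ̂_N(y₀), and the lower estimator Ŝ_N^L(y₁,y₀) = Σ_{i=1}^P (p_i − p_{i−1})·y_{1[i]}·y_{0[P+1−i]} − μ̂_N(y₁)μ̂_N(y₀), where {p_0,…,p_P} are the ordered distinct elements of {0,1/m,…,1} ∪ {0,1/(n−m),…,1}, y_{1[i]} = y_{1(⌈m p_i⌉)}, y_{0[i]} = y_{0(m+⌈(n−m)p_i⌉)} are order statistics, using the identity ∫₀¹ Ĝ_N⁻¹(u) F̂_N⁻¹(u) du = Σᵢ (p_i − p_{i−1}) y_{1[i]} y_{0[i]}. -/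
open Set MeasureTheory

/-! The integrand is constant on each open cell `(p_{i-1}, p_i)` and the cell endpoints are
Lebesgue-null, so the integral over `[p_0, p_P]` is the sum of the cell lengths times these
constants. For the reversed coupling, the symmetry `p_i = 1 - p_{P-i}` makes `u ↦ 1 - u` map the
cell `(p_{i-1}, p_i)` onto the cell `(p_{P-i}, p_{P+1-i})`. -/

theorem intervalIntegral.integral_eq_sum_of_eqOn_uIoo {E : Type*} [NormedAddCommGroup E]
    [NormedSpace ℝ E] [CompleteSpace E] {P : ℕ} {p : ℕ → ℝ} {F : ℝ → E} {c : ℕ → E}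
    (hF : ∀ i ∈ Finset.Icc 1 P, EqOn F (fun _ => c i) (uIoo (p (i - 1)) (p i))) :
    ∫ u in p 0..p P, F u = ∑ i ∈ Finset.Icc 1 P, (p i - p (i - 1)) • c i := by
  have hF' : ∀ k < P, EqOn F (fun _ => c (k + 1)) (uIoo (p k) (p (k + 1))) := fun k hk =>
    hF (k + 1) (Finset.mem_Icc.2 ⟨Nat.le_add_left 1 k, hk⟩)
  rw [← intervalIntegral.sum_integral_adjacent_intervals fun k hk =>
    (intervalIntegrable_congr_uIoo (hF' k hk)).2 intervalIntegrable_const,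
    ← Finset.Ico_add_one_right_eq_Icc, Finset.sum_Ico_eq_sum_range, Nat.add_sub_cancel]
  refine Finset.sum_congr rfl fun k hk => ?_
  rw [intervalIntegral.integral_congr_uIoo (hF' k (Finset.mem_range.1 hk)),
    intervalIntegral.integral_const, add_comm 1 k, Nat.add_sub_cancel]

theorem one_sub_mem_Ioo_of_symm {P i : ℕ} {p : ℕ → ℝ} {u : ℝ}
    (hsym : ∀ i ≤ P, p i = 1 - p (P - i)) (hi : i ∈ Finset.Icc 1 P)
    (hu : u ∈ Ioo (p (i - 1)) (p i)) : 1 - u ∈ Ioo (p (P + 1 - i - 1)) (p (P + 1 - i)) := by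
  obtain ⟨hi1, hiP⟩ := Finset.mem_Icc.1 hi
  have hlow : p (P + 1 - i - 1) = 1 - p i := by
    rw [hsym i hiP, show P + 1 - i - 1 = P - i by omega]; ring
  have hupp : p (P + 1 - i) = 1 - p (i - 1) := by
    rw [hsym (P + 1 - i) (by omega), show P - (P + 1 - i) = i - 1 by omega]
  rw [hlow, hupp]
  exact ⟨by linarith [hu.2], by linarith [hu.1]⟩

theorem stmt10_general (P : ℕ) (p : ℕ → ℝ) (Y1 Y0 : ℕ → ℝ)
    (g f : ℝ → ℝ)
    (hp0 : p 0 = 0) (hpP : p P = 1)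
    (hmono : ∀ i j, i ≤ j → j ≤ P → p i ≤ p j)
    (hg : ∀ i ∈ Finset.Icc 1 P, ∀ u ∈ Set.Ioc (p (i - 1)) (p i), g u = Y1 i)
    (hf : ∀ i ∈ Finset.Icc 1 P, ∀ u ∈ Set.Ioc (p (i - 1)) (p i), f u = Y0 i)
    (hsym : ∀ i ≤ P, p i = 1 - p (P - i)) :
    (∫ u in (0:ℝ)..1, g u * f u)
        = ∑ i ∈ Finset.Icc 1 P, (p i - p (i - 1)) * Y1 i * Y0 i ∧
    (∫ u in (0:ℝ)..1, g u * f (1 - u))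
        = ∑ i ∈ Finset.Icc 1 P, (p i - p (i - 1)) * Y1 i * Y0 (P + 1 - i) := by
  have integral_eq_sum : ∀ (F : ℝ → ℝ) (c : ℕ → ℝ),
      (∀ i ∈ Finset.Icc 1 P, EqOn F (fun _ => c i) (Ioo (p (i - 1)) (p i))) →
      ∫ u in (0:ℝ)..1, F u = ∑ i ∈ Finset.Icc 1 P, (p i - p (i - 1)) * c i := by
    intro F c hF
    rw [← hp0, ← hpP]
    refine intervalIntegral.integral_eq_sum_of_eqOn_uIoo fun i hi => ?_
    rw [uIoo_of_le (hmono _ _ (Nat.sub_le i 1) (Finset.mem_Icc.1 hi).2)]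
    exact hF i hi
  simp only [mul_assoc]
  constructor
  · refine integral_eq_sum _ _ fun i hi u hu => ?_
    rw [hg i hi u (Ioo_subset_Ioc_self hu), hf i hi u (Ioo_subset_Ioc_self hu)]
  · refine integral_eq_sum _ _ fun i hi u hu => ?_
    have hi' : P + 1 - i ∈ Finset.Icc 1 P := by
      obtain ⟨hi1, hiP⟩ := Finset.mem_Icc.1 hi
      exact Finset.mem_Icc.2 ⟨by omega, by omega⟩
    rw [hg i hi u (Ioo_subset_Ioc_self hu),
      hf _ hi' (1 - u) (Ioo_subset_Ioc_self (one_sub_mem_Ioo_of_symm hsym hi hu))]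

/-- The plug-in sharp covariance bound estimators reduce to finite sums over
the common refinement partition `{p₀,…,p_P}` on which the empirical quantile
functions `g = Ĝ⁻¹` and `f = F̂⁻¹` are piecewise constant (with values the
order statistics `Y1 i = y₁[i]`, `Y0 i = y₀[i]` on `(p_{i-1}, p_i]`), using
the symmetry `p_i = 1 - p_{P-i}`:
`∫₀¹ g(u) f(u) du = Σᵢ (pᵢ - pᵢ₋₁) y₁[i] y₀[i]` and
`∫₀¹ g(u) f(1-u) du = Σᵢ (pᵢ - pᵢ₋₁) y₁[i] y₀[P+1-i]`. -/
theorem stmt10 (P : ℕ) (hP : 0 < P) (p : ℕ → ℝ) (Y1 Y0 : ℕ → ℝ)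
    (g f : ℝ → ℝ)
    (hp0 : p 0 = 0) (hpP : p P = 1)
    (hmono : ∀ i j, i ≤ j → j ≤ P → p i ≤ p j)
    (hg : ∀ i ∈ Finset.Icc 1 P, ∀ u ∈ Set.Ioc (p (i - 1)) (p i), g u = Y1 i)
    (hf : ∀ i ∈ Finset.Icc 1 P, ∀ u ∈ Set.Ioc (p (i - 1)) (p i), f u = Y0 i)
    (hsym : ∀ i ≤ P, p i = 1 - p (P - i)) :
    (∫ u in (0:ℝ)..1, g u * f u)
        = ∑ i ∈ Finset.Icc 1 P, (p i - p (i - 1)) * Y1 i * Y0 i ∧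
    (∫ u in (0:ℝ)..1, g u * f (1 - u))
        = ∑ i ∈ Finset.Icc 1 P, (p i - p (i - 1)) * Y1 i * Y0 (P + 1 - i) :=
  stmt10_general P p Y1 Y0 g f hp0 hpP hmono hg hf hsym
end

section
/- The sharp upper bound estimator never exceeds Neyman's Cauchy–Schwarz bound estimator: V̂_N^H ≤ V̂_N^{b+}, and the sharp lower bound estimator satisfies V̂_N^L ≥ V̂_N^{b−}. Equivalently, |Ŝ_N^H(y₁,y₀)|, |Ŝ_N^L(y₁,y₀)| ≤ {Ŝ_N²(y₁)·Ŝ_N²(y₀)}^{1/2} up to the finite population correction factors. -/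
/-!
On the grid of `m * k` equal cells of `(0, 1)` both empirical quantile functions are constant
on every cell, and each takes every sample value on the same number of cells. Hence
`∫ Ĝ⁻¹(u) F̂⁻¹(u) du` and `∫ Ĝ⁻¹(u) F̂⁻¹(1 - u) du` are averages of `x j * y j` over couplings
`(x, y)` of the two samples, so `Ŝ^H` and `Ŝ^L` are covariances of couplings, which the finite
Cauchy–Schwarz inequality bounds in absolute value by the product of the population standard
deviations. As `m, k ≤ N`, the corrected variances `S1`, `S0` dominate the population ones.
-/

open Finset MeasureTheory
open scoped BigOperators

theorem abs_expect_mul_sub_expect_mul_expect_le {ι : Type*} [Fintype ι] (x y : ι → ℝ) :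
    |𝔼 i, x i * y i - (𝔼 i, x i) * 𝔼 i, y i| ≤
      √((𝔼 i, (x i - 𝔼 j, x j) ^ 2) * 𝔼 i, (y i - 𝔼 j, y j) ^ 2) := by
  cases isEmpty_or_nonempty ι
  · simp
  have hcov : 𝔼 i, x i * y i - (𝔼 i, x i) * 𝔼 i, y i
      = 𝔼 i, (x i - 𝔼 j, x j) * (y i - 𝔼 j, y j) := by
    simp only [sub_mul, mul_sub, expect_sub_distrib, ← expect_mul, ← mul_expect,
      Fintype.expect_const]
    ring
  rw [hcov]
  exact Real.abs_le_sqrt (expect_mul_sq_le_sq_mul_sq _ _ _)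

theorem abs_expect_mul_sub_le_of_expect_comp_eq {ι α β : Type*} [Fintype ι] [Fintype α]
    [Fintype β] {x y : ι → ℝ} {f : α → ℝ} {g : β → ℝ}
    (hx : ∀ F : ℝ → ℝ, 𝔼 i, F (x i) = 𝔼 a, F (f a))
    (hy : ∀ F : ℝ → ℝ, 𝔼 i, F (y i) = 𝔼 b, F (g b)) :
    |𝔼 i, x i * y i - (𝔼 a, f a) * 𝔼 b, g b| ≤
      √((𝔼 a, (f a - 𝔼 a', f a') ^ 2) * 𝔼 b, (g b - 𝔼 b', g b') ^ 2) := by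
  have hmx : 𝔼 i, x i = 𝔼 a, f a := hx id
  have hmy : 𝔼 i, y i = 𝔼 b, g b := hy id
  have hvx : 𝔼 i, (x i - 𝔼 j, x j) ^ 2 = 𝔼 a, (f a - 𝔼 a', f a') ^ 2 := by
    rw [hmx]; exact hx fun t => (t - 𝔼 a, f a) ^ 2
  have hvy : 𝔼 i, (y i - 𝔼 j, y j) ^ 2 = 𝔼 b, (g b - 𝔼 b', g b') ^ 2 := by
    rw [hmy]; exact hy fun t => (t - 𝔼 b, g b) ^ 2
  rw [← hvx, ← hvy, ← hmx, ← hmy]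
  exact abs_expect_mul_sub_expect_mul_expect_le x y

theorem intervalIntegral_eq_expect_of_eqOn_Ioo {n : ℕ} (hn : 0 < n) {φ : ℝ → ℝ} (c : Fin n → ℝ)
    (h : ∀ j : Fin n, Set.EqOn φ (fun _ => c j) (Set.Ioo (j / n) ((j + 1) / n))) :
    ∫ u in (0 : ℝ)..1, φ u = 𝔼 j, c j := by
  set a : ℕ → ℝ := fun i => i / n
  have ha : ∀ j, a j ≤ a (j + 1) := fun j => by simp only [a]; gcongr; simp
  have hcell : ∀ j : Fin n, Set.EqOn φ (fun _ => c j) (Set.uIoo (a j) (a (j + 1))) := by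
    intro j u hu
    rw [Set.uIoo_of_le (ha j)] at hu
    exact h j (by simpa [a] using hu)
  have hint : ∀ j < n, IntervalIntegrable φ volume (a j) (a (j + 1)) := fun j hj =>
    (intervalIntegrable_congr_uIoo (hcell ⟨j, hj⟩)).2 intervalIntegrable_const
  have h0 : a 0 = 0 := by simp [a]
  have h1 : a n = 1 := by simp [a, hn.ne']
  rw [← h0, ← h1, ← intervalIntegral.sum_integral_adjacent_intervals hint,
    ← Fin.sum_univ_eq_sum_range (fun j => ∫ u in a j..a (j + 1), φ u),
    Fintype.expect_eq_sum_div_card, Fintype.card_fin, sum_div]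
  refine sum_congr rfl fun j _ => ?_
  rw [intervalIntegral.integral_congr_uIoo (hcell j), intervalIntegral.integral_const]
  simp only [a, smul_eq_mul]
  field_simp
  push_cast
  ring

noncomputable def empiricalQuantile {m : ℕ} (f : Fin m → ℝ) (u : ℝ) : ℝ :=
  sInf {y : ℝ | u ≤ ((univ.filter (fun i => f i ≤ y)).card : ℝ) / m}

theorem le_natCast_div_iff_lt {m a c : ℕ} {u : ℝ}
    (hu : u ∈ Set.Ioc ((a : ℝ) / m) ((a + 1) / m)) : u ≤ (c : ℝ) / m ↔ a < c := by
  rcases Nat.eq_zero_or_pos m with rfl | hm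
  · simp only [CharP.cast_eq_zero, div_zero, Set.mem_Ioc] at hu
    exact absurd (hu.1.trans_le hu.2) (lt_irrefl 0)
  have hm : (0 : ℝ) < m := by exact_mod_cast hm
  constructor
  · intro h
    exact_mod_cast (div_lt_div_iff_of_pos_right hm).1 (hu.1.trans_le h)
  · intro h
    calc u ≤ (a + 1) / m := hu.2
      _ ≤ c / m := by gcongr; exact_mod_cast h

theorem empiricalQuantile_eq_of_mem_Ioc {m : ℕ} (f : Fin m → ℝ) (a : Fin m) {u : ℝ}
    (hu : u ∈ Set.Ioc ((a : ℝ) / m) ((a + 1) / m)) :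
    empiricalQuantile f u = f (Tuple.sort f a) := by
  have hset : {y : ℝ | u ≤ ((univ.filter (fun i => f i ≤ y)).card : ℝ) / m}
      = Set.Ici (f (Tuple.sort f a)) := by
    ext y
    rw [Set.mem_ofPred_eq, le_natCast_div_iff_lt hu, Set.mem_Ici,
      ← card_equiv (Tuple.sort f) (s := univ.filter fun i => f (Tuple.sort f i) ≤ y) (by simp)]
    exact Tuple.lt_card_le_iff_apply_le_of_monotone (Tuple.monotone_sort f)
  rw [empiricalQuantile, hset, csInf_Ici]

theorem mem_Ioc_div_of_mem_Ioo_mul {m k j : ℕ} {u : ℝ}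
    (hu : u ∈ Set.Ioo ((j : ℝ) / (m * k : ℕ)) ((j + 1) / (m * k : ℕ))) :
    u ∈ Set.Ioc (((j / k : ℕ) : ℝ) / m) (((j / k : ℕ) + 1) / m) := by
  rcases Nat.eq_zero_or_pos (m * k) with hmk | hmk
  · simp only [hmk, CharP.cast_eq_zero, div_zero, Set.mem_Ioo] at hu
    exact absurd (hu.1.trans hu.2) (lt_irrefl 0)
  have hm : (0 : ℝ) < m := by exact_mod_cast Nat.pos_of_mul_pos_right hmk
  have hk : (0 : ℝ) < k := by exact_mod_cast Nat.pos_of_mul_pos_left hmk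
  have hlo : ((j / k : ℕ) : ℝ) * k ≤ j := by exact_mod_cast Nat.div_mul_le_self j k
  have hhi : (j : ℝ) + 1 ≤ ((j / k : ℕ) : ℝ) * k + k := by
    exact_mod_cast Nat.lt_div_mul_add (a := j) (Nat.pos_of_mul_pos_left hmk)
  push_cast at hu
  constructor
  · refine lt_of_le_of_lt ?_ hu.1
    rw [div_le_div_iff₀ hm (by positivity)]
    nlinarith
  · refine hu.2.le.trans ?_
    rw [div_le_div_iff₀ (by positivity) hm]
    nlinarith

theorem one_sub_mem_Ioo_rev {n : ℕ} (j : Fin n) {u : ℝ}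
    (hu : u ∈ Set.Ioo ((j : ℝ) / n) ((j + 1) / n)) :
    1 - u ∈ Set.Ioo ((j.rev : ℝ) / n) ((j.rev + 1) / n) := by
  have hn : (n : ℝ) ≠ 0 := by have := j.pos; positivity
  have hrev : (j.rev : ℝ) = n - (j + 1) := by
    rw [Fin.val_rev, Nat.cast_sub j.isLt]
    push_cast
    ring
  have hlo : (j.rev : ℝ) / n = 1 - (j + 1) / n := by rw [hrev]; field_simp
  have hhi : ((j.rev : ℝ) + 1) / n = 1 - j / n := by rw [hrev]; field_simp; ring
  rw [hlo, hhi]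
  exact ⟨by linarith [hu.2], by linarith [hu.1]⟩

theorem exists_eqOn_Ioo_empiricalQuantile {m n : ℕ} (f : Fin m → ℝ) (hn : 0 < n) (hmn : m ∣ n) :
    ∃ x : Fin n → ℝ,
      (∀ j : Fin n,
        Set.EqOn (empiricalQuantile f) (fun _ => x j) (Set.Ioo (j / n) ((j + 1) / n))) ∧
      ∀ F : ℝ → ℝ, 𝔼 j, F (x j) = 𝔼 i, F (f i) := by
  obtain ⟨k, rfl⟩ := hmn
  have : Nonempty (Fin k) := ⟨⟨0, Nat.pos_of_mul_pos_left hn⟩⟩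
  refine ⟨fun j => f (Tuple.sort f j.divNat), fun j _ hu =>
    empiricalQuantile_eq_of_mem_Ioc f _ (mem_Ioc_div_of_mem_Ioo_mul hu), fun F => ?_⟩
  calc 𝔼 j, F (f (Tuple.sort f j.divNat))
      = 𝔼 p : Fin m × Fin k, F (f (Tuple.sort f p.1)) :=
        Fintype.expect_equiv finProdFinEquiv.symm _ _ fun _ => rfl
    _ = 𝔼 i, F (f (Tuple.sort f i)) := by
        rw [← univ_product_univ, expect_product]
        simp only [Fintype.expect_const]
    _ = 𝔼 i, F (f i) := Fintype.expect_equiv (Tuple.sort f) _ _ fun _ => rfl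

theorem expect_le_sub_one_div_mul_sub_one_mul_sum {m : ℕ} {N : ℝ} (hm : 1 < m) (hmN : m ≤ N)
    {f : Fin m → ℝ} (hf : ∀ i, 0 ≤ f i) :
    𝔼 i, f i ≤ (N - 1) / (N * (m - 1)) * ∑ i, f i := by
  have hmR : (1 : ℝ) < m := by exact_mod_cast hm
  have hcoef : 1 / (m : ℝ) ≤ (N - 1) / (N * (m - 1)) := by
    rw [div_le_div_iff₀ (by positivity) (by nlinarith)]
    nlinarith
  rw [Fintype.expect_eq_sum_div_card, Fintype.card_fin, div_eq_inv_mul, inv_eq_one_div]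
  exact mul_le_mul_of_nonneg_right hcoef (sum_nonneg fun i _ => hf i)

/-- The sharp bound estimators improve on Neyman's Cauchy–Schwarz bound
estimators: `V̂_N^H ≤ V̂_N^{b+}` and `V̂_N^{b-} ≤ V̂_N^L`, where the sharp
estimators use the comonotonic/countermonotonic plug-in covariances built from
the empirical quantile functions, and the Neyman bounds use
`± 2 √(Ŝ_N²(y₁) Ŝ_N²(y₀))`. -/
theorem stmt12 (N m k : ℕ) (hm : 2 ≤ m) (hk : 2 ≤ k) (hn : m + k ≤ N)
    (yt : Fin m → ℝ) (yc : Fin k → ℝ) :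
    let μ1 := (∑ i, yt i) / (m : ℝ)
    let μ0 := (∑ i, yc i) / (k : ℝ)
    let Ghat : ℝ → ℝ := fun y => ((Finset.univ.filter (fun i => yt i ≤ y)).card : ℝ) / (m : ℝ)
    let Fhat : ℝ → ℝ := fun y => ((Finset.univ.filter (fun i => yc i ≤ y)).card : ℝ) / (k : ℝ)
    let Ginv : ℝ → ℝ := fun u => sInf {y : ℝ | u ≤ Ghat y}
    let Finv : ℝ → ℝ := fun u => sInf {y : ℝ | u ≤ Fhat y}
    let SH := (∫ u in (0:ℝ)..1, Ginv u * Finv u) - μ1 * μ0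
    let SL := (∫ u in (0:ℝ)..1, Ginv u * Finv (1 - u)) - μ1 * μ0
    let S1 := ((N : ℝ) - 1) / ((N : ℝ) * ((m : ℝ) - 1)) * ∑ i, (yt i - μ1) ^ 2
    let S0 := ((N : ℝ) - 1) / ((N : ℝ) * ((k : ℝ) - 1)) * ∑ i, (yc i - μ0) ^ 2
    let base := ((N : ℝ) - m) / m * S1 + ((N : ℝ) - k) / k * S0
    (1 / ((N : ℝ) - 1)) * (base + 2 * SH)
        ≤ (1 / ((N : ℝ) - 1)) * (base + 2 * Real.sqrt (S1 * S0)) ∧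
    (1 / ((N : ℝ) - 1)) * (base - 2 * Real.sqrt (S1 * S0))
        ≤ (1 / ((N : ℝ) - 1)) * (base + 2 * SL) := by
  intro μ1 μ0 Ghat Fhat Ginv Finv SH SL S1 S0 base
  have hmk : 0 < m * k := Nat.mul_pos (by omega) (by omega)
  obtain ⟨x, hxG, hx⟩ := exists_eqOn_Ioo_empiricalQuantile yt hmk (dvd_mul_right m k)
  obtain ⟨y, hyF, hy⟩ := exists_eqOn_Ioo_empiricalQuantile yc hmk (dvd_mul_left k m)
  have hyrev : ∀ F : ℝ → ℝ, 𝔼 j, F (y (Fin.rev j)) = 𝔼 i, F (yc i) := fun F =>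
    (Fintype.expect_equiv Fin.revPerm _ _ fun _ => rfl).trans (hy F)
  have hμ1 : μ1 = 𝔼 i, yt i := by simp [μ1, Fintype.expect_eq_sum_div_card]
  have hμ0 : μ0 = 𝔼 i, yc i := by simp [μ0, Fintype.expect_eq_sum_div_card]
  have hSH : SH = 𝔼 j, x j * y j - μ1 * μ0 := by
    change (∫ u in (0 : ℝ)..1, empiricalQuantile yt u * empiricalQuantile yc u) - μ1 * μ0 = _
    rw [intervalIntegral_eq_expect_of_eqOn_Ioo hmk _ fun j _ hu =>
      congrArg₂ (· * ·) (hxG j hu) (hyF j hu)]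
  have hSL : SL = 𝔼 j, x j * y (Fin.rev j) - μ1 * μ0 := by
    change (∫ u in (0 : ℝ)..1, empiricalQuantile yt u * empiricalQuantile yc (1 - u))
      - μ1 * μ0 = _
    rw [intervalIntegral_eq_expect_of_eqOn_Ioo hmk _ fun j _ hu =>
      congrArg₂ (· * ·) (hxG j hu) (hyF (Fin.rev j) (one_sub_mem_Ioo_rev j hu))]
  have hH := abs_expect_mul_sub_le_of_expect_comp_eq hx hy
  have hL := abs_expect_mul_sub_le_of_expect_comp_eq hx hyrev
  rw [← hμ1, ← hμ0, ← hSH] at hH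
  rw [← hμ1, ← hμ0, ← hSL] at hL
  have hv1 : 𝔼 i, (yt i - μ1) ^ 2 ≤ S1 :=
    expect_le_sub_one_div_mul_sub_one_mul_sum (by omega) (by exact_mod_cast (by omega : m ≤ N))
      fun _ => sq_nonneg _
  have hv0 : 𝔼 i, (yc i - μ0) ^ 2 ≤ S0 :=
    expect_le_sub_one_div_mul_sub_one_mul_sum (by omega) (by exact_mod_cast (by omega : k ≤ N))
      fun _ => sq_nonneg _
  have hsqrt : √((𝔼 i, (yt i - μ1) ^ 2) * 𝔼 i, (yc i - μ0) ^ 2) ≤ √(S1 * S0) :=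
    Real.sqrt_le_sqrt (mul_le_mul hv1 hv0 (expect_nonneg fun _ _ => sq_nonneg _)
      ((expect_nonneg fun _ _ => sq_nonneg _).trans hv1))
  have hN : 0 ≤ 1 / ((N : ℝ) - 1) :=
    one_div_nonneg.2 (sub_nonneg.2 (by exact_mod_cast (by omega : 1 ≤ N)))
  exact ⟨mul_le_mul_of_nonneg_left (by linarith [(abs_le.1 hH).2]) hN,
    mul_le_mul_of_nonneg_left (by linarith [(abs_le.1 hL).1]) hN⟩
end
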